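/- Let K be a field of characteristic zero and H ∈ K[x_1,...,x_n]ⁿ such that x + H is a quasi-translation (i.e., JH · H = 0, equivalently x − H is the inverse of x + H). Then (JH)·(JH)|_{x=y} = 0 (for a fresh tuple y of indeterminates) if and only if (JH)·H(y) = 0. -/

import Mathlib

/-!
Differentiating `JH(x) · H(y)` with respect to `y` gives `JH(x) · JH(y)`, because `JH(x)` does not
involve `y`. So if `JH(x) · JH(y) = 0`, every entry of `JH(x) · H(y)` is, in characteristic zero,
a polynomial in `x` alone; it is then recovered by substituting `y = x`, which yields `JH · H = 0`.
-/

open MvPolynomial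

/-- The Jacobian matrix `(∂H_i/∂x_j)` of a polynomial map `H`. -/
noncomputable def jac {K : Type} [CommRing K] {n : ℕ}
    (H : Fin n → MvPolynomial (Fin n) K) :
    Matrix (Fin n) (Fin n) (MvPolynomial (Fin n) K) :=
  Matrix.of fun i j => pderiv j (H i)

/-- `(JH)|_{x=x}`: the Jacobian, viewed in the larger ring with variables `x ⊕ y`. -/
noncomputable def jacX {K : Type} [CommRing K] {n : ℕ}
    (H : Fin n → MvPolynomial (Fin n) K) :
    Matrix (Fin n) (Fin n) (MvPolynomial (Fin n ⊕ Fin n) K) :=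
  (jac H).map (rename Sum.inl)

/-- `(JH)|_{x=y}`: the Jacobian with the fresh tuple `y` substituted for `x`. -/
noncomputable def jacY {K : Type} [CommRing K] {n : ℕ}
    (H : Fin n → MvPolynomial (Fin n) K) :
    Matrix (Fin n) (Fin n) (MvPolynomial (Fin n ⊕ Fin n) K) :=
  (jac H).map (rename Sum.inr)

/-- `H(y)`: the map `H` with the fresh tuple `y` substituted for `x`. -/
noncomputable def HY {K : Type} [CommRing K] {n : ℕ}
    (H : Fin n → MvPolynomial (Fin n) K) : Fin n → MvPolynomial (Fin n ⊕ Fin n) K :=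
  fun i => rename Sum.inr (H i)

namespace MvPolynomial

variable {R σ τ : Type*} [CommSemiring R]

theorem notMem_vars_of_pderiv_eq_zero [IsAddTorsionFree R] {i : σ} {p : MvPolynomial σ R}
    (h : pderiv i p = 0) : i ∉ p.vars := by
  classical
  intro hi
  obtain ⟨d, hd, hdi⟩ := (mem_vars_iff_mem_support i).mp hi
  have hd' : d - Finsupp.single i 1 + Finsupp.single i 1 = d :=
    tsub_add_cancel_of_le (Finsupp.single_le_iff.mpr (Nat.one_le_iff_ne_zero.mpr
      (Finsupp.mem_support_iff.mp hdi)))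
  have hcoeff := coeff_pderiv (i := i) p (d - Finsupp.single i 1)
  rw [h, hd', coeff_zero, ← Nat.cast_succ, ← nsmul_eq_mul', eq_comm] at hcoeff
  exact mem_support_iff.mp hd ((nsmul_eq_zero_iff_right (Nat.succ_ne_zero _)).mp hcoeff)

theorem pderiv_inr_rename_inl (j : τ) (p : MvPolynomial σ R) :
    pderiv (Sum.inr j) (rename Sum.inl p) = 0 := by
  apply pderiv_eq_zero_of_notMem_vars
  intro hmem
  obtain ⟨i, -, hi⟩ := mem_vars_rename _ _ hmem
  exact Sum.inl_ne_inr hi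

theorem exists_rename_inl_eq_of_pderiv_inr_eq_zero [IsAddTorsionFree R]
    (p : MvPolynomial (σ ⊕ τ) R) (h : ∀ j, pderiv (Sum.inr j) p = 0) :
    ∃ q : MvPolynomial σ R, rename Sum.inl q = p := by
  refine exists_rename_eq_of_vars_subset_range p _ Sum.inl_injective fun v hv => ?_
  cases v with
  | inl i => exact ⟨i, rfl⟩
  | inr j => exact absurd hv (notMem_vars_of_pderiv_eq_zero (h j))

end MvPolynomial

section Jacobian

variable {K : Type} [CommRing K] {n : ℕ} (H : Fin n → MvPolynomial (Fin n) K)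

theorem pderiv_inr_jacX_mulVec_HY (i j : Fin n) :
    pderiv (Sum.inr j) ((jacX H).mulVec (HY H) i) = (jacX H * jacY H) i j := by
  simp only [Matrix.mulVec, dotProduct, Matrix.mul_apply, map_sum]
  refine Finset.sum_congr rfl fun k _ => ?_
  simp only [jacX, jacY, HY, jac, Matrix.map_apply, Matrix.of_apply]
  rw [pderiv_mul, pderiv_inr_rename_inl, zero_mul, zero_add, pderiv_rename Sum.inr_injective]

theorem aeval_diag_jacX_mulVec_HY (i : Fin n) :
    aeval (Sum.elim X X) ((jacX H).mulVec (HY H) i) = (jac H).mulVec H i := by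
  simp only [Matrix.mulVec, dotProduct, map_sum, map_mul, jacX, HY, Matrix.map_apply,
    aeval_rename, Sum.elim_comp_inl, Sum.elim_comp_inr, aeval_X_left_apply]

end Jacobian

theorem stmt15 {K : Type} [Field K] [CharZero K] {n : ℕ}
    (H : Fin n → MvPolynomial (Fin n) K)
    (hq : (jac H).mulVec H = 0) :
    jacX H * jacY H = 0 ↔ (jacX H).mulVec (HY H) = 0 := by
  constructor
  · intro hmul
    funext i
    obtain ⟨q, hrename⟩ := exists_rename_inl_eq_of_pderiv_inr_eq_zero ((jacX H).mulVec (HY H) i)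
      fun j => by rw [pderiv_inr_jacX_mulVec_HY, hmul]; rfl
    have hq0 : q = 0 := by
      have hdiag := aeval_diag_jacX_mulVec_HY H i
      rwa [← hrename, aeval_rename, Sum.elim_comp_inl, aeval_X_left_apply, hq] at hdiag
    rw [← hrename, hq0, map_zero, Pi.zero_apply]
  · intro hvec
    ext i j
    rw [← pderiv_inr_jacX_mulVec_HY, hvec, Pi.zero_apply, map_zero, Matrix.zero_apply]
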